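/- Let n ≥ 1 and let X be a 1×2n random matrix (a row vector) whose entries are independent standard complex Gaussian random variables. Then the inverse normalized second moment satisfies E[ |Haf(XᵀX)|² ]² / E[ |Haf(XᵀX)|⁴ ] = 4^{−n}. -/

import Mathlib

/-!
Since `XᵀX = x xᵀ` has rank one, every term of the hafnian sum equals `∏ᵢ xᵢ`, so
`Haf(XᵀX) = c ∏ᵢ xᵢ` with `c = (2n)!/(2ⁿ n!)`. By independence of the entries,
`E|Haf|^(2k) = c^(2k) (E|z|^(2k))^(2n)`, and the density `π⁻¹ exp(-|z|²)` of a standard complex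
Gaussian gives `E|z|^(2k) = k!`. Hence the ratio is `(c²)² / (c⁴ 2^(2n)) = 4⁻ⁿ`.
-/

open scoped BigOperators
open MeasureTheory ProbabilityTheory Matrix

namespace GBS

/-- The distribution of a standard complex Gaussian random variable `Z = A + iB`, where `A, B`
are independent real Gaussians with mean `0` and variance `1/2` (so `E[Z] = 0`, `E[|Z|²] = 1`). -/
noncomputable def stdComplexGaussian : Measure ℂ :=
  Measure.map Complex.measurableEquivRealProd.symm
    ((gaussianReal 0 (1 / 2)).prod (gaussianReal 0 (1 / 2)))

instance : IsProbabilityMeasure stdComplexGaussian :=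
  Measure.isProbabilityMeasure_map Complex.measurableEquivRealProd.symm.measurable.aemeasurable

/-- The distribution of a `k × 2n` random matrix with i.i.d. standard complex Gaussian entries,
as a measure on `Fin k → Fin (2*n) → ℂ`. -/
noncomputable def gaussianMatrix (k n : ℕ) : Measure (Fin k → Fin (2 * n) → ℂ) :=
  Measure.pi fun _ => Measure.pi fun _ => stdComplexGaussian

/-- The 0-indexed version of the 1-indexed element `2j-1` of `{1,…,2n}`. -/
def lo (n : ℕ) (j : Fin n) : Fin (2 * n) := ⟨2 * (j : ℕ), by omega⟩

/-- The 0-indexed version of the 1-indexed element `2j` of `{1,…,2n}`. -/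
def hi (n : ℕ) (j : Fin n) : Fin (2 * n) := ⟨2 * (j : ℕ) + 1, by omega⟩

/-- The hafnian of a `2n × 2n` complex matrix:
`Haf(A) = (1/(2^n n!)) ∑_{σ ∈ S_{2n}} ∏_{j=1}^n A_{σ(2j−1), σ(2j)}`. -/
noncomputable def hafnian (n : ℕ) (A : Matrix (Fin (2 * n)) (Fin (2 * n)) ℂ) : ℂ :=
  (1 / (2 ^ n * n.factorial : ℂ)) *
    ∑ σ : Equiv.Perm (Fin (2 * n)), ∏ j : Fin n, A (σ (lo n j)) (σ (hi n j))

open Real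

lemma integral_stdComplexGaussian (f : ℂ → ℝ) :
    ∫ z, f z ∂stdComplexGaussian = π⁻¹ * ∫ z, rexp (-‖z‖ ^ 2) * f z := by
  have hv : (1 / 2 : NNReal) ≠ 0 := by norm_num
  have hpdf : ∀ p : ℝ × ℝ, (gaussianPDF 0 (1 / 2) p.1 * gaussianPDF 0 (1 / 2) p.2).toReal
      = π⁻¹ * rexp (-‖Complex.measurableEquivRealProd.symm p‖ ^ 2) := by
    intro p
    rw [ENNReal.toReal_mul, gaussianPDF, gaussianPDF,
      ENNReal.toReal_ofReal (gaussianPDFReal_nonneg _ _ _),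
      ENNReal.toReal_ofReal (gaussianPDFReal_nonneg _ _ _),
      Complex.measurableEquivRealProd_symm_apply, Complex.sq_norm, Complex.normSq_mk,
      gaussianPDFReal, gaussianPDFReal]
    have hsqrt : √(2 * π * ((1 / 2 : NNReal) : ℝ)) = √π := by congr 1; push_cast; ring
    rw [hsqrt, mul_mul_mul_comm, ← mul_inv, mul_self_sqrt pi_pos.le, ← exp_add]
    congr 2
    push_cast
    ring
  rw [stdComplexGaussian, integral_map_equiv, gaussianReal_of_var_ne_zero 0 hv,
    prod_withDensity (measurable_gaussianPDF 0 _) (measurable_gaussianPDF 0 _),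
    integral_withDensity_eq_integral_toReal_smul (by fun_prop)
      (ae_of_all _ fun _ => ENNReal.mul_lt_top gaussianPDF_lt_top gaussianPDF_lt_top),
    ← Measure.volume_eq_prod, ← integral_const_mul,
    ← (Complex.volume_preserving_equiv_real_prod.symm).integral_comp']
  simp only [hpdf, smul_eq_mul, mul_assoc]

lemma integral_norm_rpow_stdComplexGaussian {q : ℝ} (hq : -2 < q) :
    ∫ z, ‖z‖ ^ q ∂stdComplexGaussian = Gamma (q / 2 + 1) := by
  have hexp : ∀ z : ℂ, rexp (-‖z‖ ^ 2) * ‖z‖ ^ q = ‖z‖ ^ q * rexp (-1 * ‖z‖ ^ (2 : ℝ)) := by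
    intro z
    rw [rpow_two, neg_one_mul, mul_comm]
  simp_rw [integral_stdComplexGaussian, hexp,
    Complex.integral_rpow_mul_exp_neg_mul_rpow one_le_two hq one_pos, one_rpow]
  field_simp

lemma integral_norm_pow_two_mul_stdComplexGaussian (k : ℕ) :
    ∫ z, ‖z‖ ^ (2 * k) ∂stdComplexGaussian = k.factorial := by
  have h := integral_norm_rpow_stdComplexGaussian (q := (2 * k : ℕ))
    (lt_of_lt_of_le (by norm_num) (Nat.cast_nonneg _))
  simp_rw [rpow_natCast] at h
  rw [h, Nat.cast_mul, Nat.cast_two, mul_div_cancel_left₀ _ two_ne_zero, Gamma_nat_eq_factorial]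

lemma prod_lo_mul_hi {M : Type*} [CommMonoid M] (n : ℕ) (g : Fin (2 * n) → M) :
    ∏ j, g (lo n j) * g (hi n j) = ∏ i, g i := by
  let e : Fin n × Fin 2 ≃ Fin (2 * n) := finProdFinEquiv.trans (finCongr (mul_comm n 2))
  rw [← e.prod_comp, Fintype.prod_prod_type]
  refine Finset.prod_congr rfl fun j _ => ?_
  rw [Fin.prod_univ_two]
  congr 2
  · ext; simp [e, lo, mul_comm]
  · ext; simp [e, hi]; ring

lemma hafnian_vecMulVec_self (n : ℕ) (v : Fin (2 * n) → ℂ) :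
    hafnian n (vecMulVec v v) = ((2 * n).factorial / (2 ^ n * n.factorial) : ℂ) * ∏ i, v i := by
  have hterm : ∀ σ : Equiv.Perm (Fin (2 * n)),
      ∏ j, vecMulVec v v (σ (lo n j)) (σ (hi n j)) = ∏ i, v i := fun σ => by
    simp only [vecMulVec_apply]
    exact (prod_lo_mul_hi n (v ∘ σ)).trans (Equiv.prod_comp σ v)
  rw [hafnian, Finset.sum_congr rfl fun σ _ => hterm σ, Finset.sum_const, Finset.card_univ,
    Fintype.card_perm, Fintype.card_fin, nsmul_eq_mul]
  ring

lemma transpose_mul_self_eq_vecMulVec {m : ℕ} (X : Fin 1 → Fin m → ℂ) :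
    (Matrix.of X)ᵀ * Matrix.of X = vecMulVec (X 0) (X 0) := by
  ext i j
  simp [mul_apply, vecMulVec_apply]

lemma integral_prod_prod_gaussianMatrix {𝕜 : Type*} [RCLike 𝕜] (k n : ℕ) (h : ℂ → 𝕜) :
    ∫ X, ∏ r, ∏ i, h (X r i) ∂gaussianMatrix k n
      = (∫ z, h z ∂stdComplexGaussian) ^ (2 * n * k) := by
  rw [gaussianMatrix, integral_fintype_prod_eq_pow (fun y : Fin (2 * n) → ℂ => ∏ i, h (y i)),
    integral_fintype_prod_eq_pow h]
  simp only [Fintype.card_fin, pow_mul]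

lemma integral_norm_hafnian_row_pow_two_mul (n k : ℕ) :
    ∫ X, ‖hafnian n ((Matrix.of X)ᵀ * Matrix.of X)‖ ^ (2 * k) ∂gaussianMatrix 1 n
      = ((2 * n).factorial / (2 ^ n * n.factorial) : ℝ) ^ (2 * k) * (k.factorial : ℝ) ^ (2 * n) := by
  have hnorm : ∀ X : Fin 1 → Fin (2 * n) → ℂ,
      ‖hafnian n ((Matrix.of X)ᵀ * Matrix.of X)‖ ^ (2 * k)
        = ((2 * n).factorial / (2 ^ n * n.factorial) : ℝ) ^ (2 * k)
          * ∏ r, ∏ i, ‖X r i‖ ^ (2 * k) := fun X => by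
    rw [transpose_mul_self_eq_vecMulVec, hafnian_vecMulVec_self, norm_mul, norm_prod, mul_pow,
      Fin.prod_univ_one, Finset.prod_pow]
    simp only [norm_div, norm_mul, norm_pow, Complex.norm_natCast, Complex.norm_ofNat]
  simp_rw [hnorm, integral_const_mul]
  rw [integral_prod_prod_gaussianMatrix 1 n (‖·‖ ^ (2 * k)),
    integral_norm_pow_two_mul_stdComplexGaussian, mul_one]

theorem inverse_normalized_second_moment_one_row_general (n : ℕ) :
    (∫ X, ‖hafnian n ((Matrix.of X)ᵀ * Matrix.of X)‖ ^ 2 ∂gaussianMatrix 1 n) ^ 2 /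
        (∫ X, ‖hafnian n ((Matrix.of X)ᵀ * Matrix.of X)‖ ^ 4 ∂gaussianMatrix 1 n) =
      ((4 : ℝ) ^ n)⁻¹ := by
  have h2 := integral_norm_hafnian_row_pow_two_mul n 1
  have h4 := integral_norm_hafnian_row_pow_two_mul n 2
  norm_num at h2 h4
  have hc : ((2 * n).factorial / (2 ^ n * n.factorial) : ℝ) ≠ 0 := by positivity
  rw [h2, h4, pow_mul]
  field_simp
  norm_num

/-- For `n ≥ 1` and `X` a `1 × 2n` row vector of i.i.d. standard complex
Gaussians, `E[|Haf(XᵀX)|²]² / E[|Haf(XᵀX)|⁴] = 4^{−n}`. -/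
theorem inverse_normalized_second_moment_one_row (n : ℕ) (hn : 1 ≤ n) :
    (∫ X, ‖hafnian n ((Matrix.of X)ᵀ * Matrix.of X)‖ ^ 2 ∂gaussianMatrix 1 n) ^ 2 /
        (∫ X, ‖hafnian n ((Matrix.of X)ᵀ * Matrix.of X)‖ ^ 4 ∂gaussianMatrix 1 n) =
      ((4 : ℝ) ^ n)⁻¹ :=
  inverse_normalized_second_moment_one_row_general n

end GBS
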